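/- Let γ be a convex Dini-smooth Jordan curve with arc-length parametrization g, and f a Lipschitz weak homeomorphism of [0,2π] onto [0,l] whose image under g∘f traverses γ in the positive direction. Then T[f](τ) > 0 for every τ ∈ [0, 2π]. -/

import Mathlib

/-!
Convexity makes the kernel nonnegative: a functional separating the boundary point `g (f τ)`
from `D` is maximal along the curve at `f τ`, so it vanishes on the tangent `g' (f τ)` and is a
negative multiple of the pairing with the inner normal `i g' (f τ)`. The kernel is not identically
zero: the inner normal ray leaves the bounded set `D` through a boundary point strictly on the
inner side of the tangent line, and `g ∘ f` passes through every boundary point in each period.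
The integrand is integrable: centring the period at `τ`, the Dini condition and the Lipschitz
bound on `f` give `|K(f τ, f (τ + x))| ≤ L |x| ω (L |x|)`, while `2 sin² (x / 2) ≥ 2 x² / π²`, so
near `x = 0` the integrand is dominated by a multiple of `ω (L |x|) / |x|`.
-/

open MeasureTheory Set Real

/-- The kernel `K(s,t) = Re[ conj(g(t) − g(s)) · i g'(s) ]`. -/
noncomputable def Kker (g : ℝ → ℂ) (s t : ℝ) : ℝ :=
  ((starRingEnd ℂ) (g t - g s) * (Complex.I * deriv g s)).re

/-- The operator `T[f](τ) = ∫₀^{2π} K(f(τ), f(t)) / (2 sin²((t−τ)/2)) dt`. -/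
noncomputable def Topf (g : ℝ → ℂ) (f : ℝ → ℝ) (τ : ℝ) : ℝ :=
  ∫ t in (0:ℝ)..(2 * π), Kker g (f τ) (f t) / (2 * Real.sin ((t - τ) / 2) ^ 2)

open scoped RealInnerProductSpace
open Bornology Function

theorem Kker_eq_inner (g : ℝ → ℂ) (s t : ℝ) : Kker g s t = ⟪g t - g s, Complex.I * deriv g s⟫ := by
  rw [Kker, Complex.inner, mul_comm]

theorem continuous_Kker {g : ℝ → ℂ} (hg : Continuous g) (s : ℝ) : Continuous (Kker g s) := by
  simp only [funext (Kker_eq_inner g s)]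
  fun_prop

theorem sq_norm_mul_apply_of_apply_eq_zero (φ : ℂ →L[ℝ] ℝ) {e : ℂ} (he : φ e = 0) (z : ℂ) :
    ‖e‖ ^ 2 * φ z = ⟪z, Complex.I * e⟫ * φ (Complex.I * e) := by
  have hz : (‖e‖ ^ 2 : ℝ) • z = ⟪z, e⟫ • e + ⟪z, Complex.I * e⟫ • (Complex.I * e) := by
    apply Complex.ext <;>
      simp [Complex.inner, Complex.sq_norm, Complex.normSq_apply] <;> ring
  have := congrArg φ hz
  rwa [map_add, map_smul, map_smul, map_smul, he, smul_zero, zero_add, smul_eq_mul,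
    smul_eq_mul] at this

/-- A functional separating `g s` from `D` peaks along the curve at `s`, so it kills `g' s` and
is therefore a negative multiple of `⟪·, i g' s⟫`. -/
theorem Convex.inner_sub_mul_I_deriv_nonneg {D : Set ℂ} (hD : Convex ℝ D) (hDo : IsOpen D)
    {g : ℝ → ℂ} {s u : ℝ} (hg : DifferentiableAt ℝ g s) (hgD : ∀ t, g t ∈ closure D)
    (hgs : g s ∉ D) (hu : 0 < u) (hin : g s + u * (Complex.I * deriv g s) ∈ D)
    {p : ℂ} (hp : p ∈ closure D) : 0 ≤ ⟪p - g s, Complex.I * deriv g s⟫ := by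
  obtain ⟨φ, hφ⟩ := geometric_hahn_banach_open_point hD hDo hgs
  have hle : ∀ z ∈ closure D, φ z ≤ φ (g s) := fun z hz =>
    closure_minimal (fun a ha => (hφ a ha).le) (isClosed_le φ.continuous continuous_const) hz
  have htangent : φ (deriv g s) = 0 := by
    have hmax : IsLocalMax (φ ∘ g) s := Filter.Eventually.of_forall fun t => hle _ (hgD t)
    simpa using hmax.hasDerivAt_eq_zero (φ.hasFDerivAt.comp_hasDerivAt s hg.hasDerivAt)
  have hnormal : φ (Complex.I * deriv g s) < 0 := by
    have := hφ _ hin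
    rw [map_add, ← Complex.real_smul, map_smul, smul_eq_mul] at this
    nlinarith
  have hpx : φ (p - g s) ≤ 0 := by
    rw [map_sub]
    linarith [hle p hp]
  have := sq_norm_mul_apply_of_apply_eq_zero φ htangent (p - g s)
  nlinarith [sq_nonneg ‖deriv g s‖]

theorem Bornology.IsBounded.exists_add_smul_mem_frontier {E : Type*} [NormedAddCommGroup E]
    [NormedSpace ℝ E] {D : Set E} (hD : IsBounded D) {p v : E} (hp : p ∈ D) (hv : v ≠ 0) :
    ∃ t ≥ (0 : ℝ), p + t • v ∈ frontier D := by
  by_cases hpi : p ∈ interior D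
  case neg => exact ⟨0, le_rfl, by rw [zero_smul, add_zero]; exact ⟨subset_closure hp, hpi⟩⟩
  obtain ⟨r, hr⟩ := hD.subset_closedBall p
  set R := (|r| + 1) / ‖v‖
  have hR : 0 ≤ R := by positivity
  have hRD : p + R • v ∉ D := fun h => by
    have := hr h
    rw [Metric.mem_closedBall, dist_eq_norm, add_sub_cancel_left, norm_smul, Real.norm_of_nonneg hR,
      div_mul_cancel₀ _ (norm_ne_zero_iff.2 hv)] at this
    linarith [le_abs_self r]
  by_contra! hnone
  set S := (fun t : ℝ => p + t • v) '' Icc 0 R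
  have hS : IsPreconnected S := isPreconnected_Icc.image _ (by fun_prop)
  have hSsub : S ⊆ interior D ∪ (closure D)ᶜ := by
    rintro _ ⟨t, ht, rfl⟩
    by_contra h
    simp only [mem_union, mem_compl_iff, not_or, not_not] at h
    exact hnone t ht.1 ⟨h.2, h.1⟩
  have := hS.subset_left_of_subset_union isOpen_interior isClosed_closure.isOpen_compl
    (disjoint_compl_right.mono_left interior_subset_closure) hSsub
    ⟨p, ⟨0, ⟨le_rfl, hR⟩, by simp⟩, hpi⟩ ⟨R, ⟨hR, le_rfl⟩, rfl⟩
  exact hRD (interior_subset this)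

theorem Bornology.IsBounded.exists_frontier_inner_pos {E : Type*} [NormedAddCommGroup E]
    [InnerProductSpace ℝ E] {D : Set E} (hD : IsBounded D) {x v : E} {u : ℝ} (hu : 0 < u)
    (hv : v ≠ 0) (hin : x + u • v ∈ D) : ∃ q ∈ frontier D, 0 < ⟪q - x, v⟫ := by
  obtain ⟨t, ht, hq⟩ := hD.exists_add_smul_mem_frontier hin hv
  refine ⟨_, hq, ?_⟩
  rw [add_assoc, ← add_smul, add_sub_cancel_left, real_inner_smul_left, real_inner_self_eq_norm_sq]
  have := norm_pos_iff.2 hv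
  positivity

theorem norm_sub_sub_smul_deriv_le {E : Type*} [NormedAddCommGroup E] [NormedSpace ℝ E]
    {g : ℝ → E} (hg : Differentiable ℝ g) {s t C : ℝ}
    (hC : ∀ u ∈ uIcc s t, ‖deriv g u - deriv g s‖ ≤ C) :
    ‖g t - g s - (t - s) • deriv g s‖ ≤ C * |t - s| := by
  have hderiv : ∀ u, HasDerivAt (fun v => g v - v • deriv g s) (deriv g u - deriv g s) u :=
    fun u => by
      simpa using (hg u).hasDerivAt.fun_sub ((hasDerivAt_id' u).smul_const (deriv g s))
  have := (convex_uIcc s t).norm_image_sub_le_of_norm_deriv_le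
    (fun u _ => (hderiv u).differentiableAt) (fun u hu => (hderiv u).deriv ▸ hC u hu)
    left_mem_uIcc right_mem_uIcc
  rwa [Real.norm_eq_abs, sub_sub_sub_comm, ← sub_smul] at this

theorem abs_inner_sub_mul_I_deriv_le {g : ℝ → ℂ} (hg : Differentiable ℝ g) {s t δ C : ℝ}
    (hs : ‖deriv g s‖ = 1) (hst : |t - s| ≤ δ)
    (hC : ∀ u, |u - s| ≤ δ → ‖deriv g u - deriv g s‖ ≤ C) :
    |⟪g t - g s, Complex.I * deriv g s⟫| ≤ δ * C := by
  have hC0 : 0 ≤ C := by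
    simpa using hC s (by simpa using (abs_nonneg _).trans hst)
  have horth : ⟪deriv g s, Complex.I * deriv g s⟫ = 0 := by
    simp [Complex.inner]; ring
  have hrem := norm_sub_sub_smul_deriv_le hg fun u hu =>
    hC u ((abs_sub_left_of_mem_uIcc hu).trans hst)
  calc |⟪g t - g s, Complex.I * deriv g s⟫|
      = |⟪g t - g s - (t - s) • deriv g s, Complex.I * deriv g s⟫| := by
        rw [inner_sub_left _ ((t - s) • _), real_inner_smul_left, horth, mul_zero, sub_zero]
    _ ≤ ‖g t - g s - (t - s) • deriv g s‖ * ‖Complex.I * deriv g s‖ :=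
        abs_real_inner_le_norm _ _
    _ = ‖g t - g s - (t - s) • deriv g s‖ := by rw [norm_mul, Complex.norm_I, hs, one_mul, mul_one]
    _ ≤ C * |t - s| := hrem
    _ ≤ δ * C := by rw [mul_comm]; gcongr

theorem sq_div_pi_le_sin_half_sq {x : ℝ} (hx : |x| ≤ π) : (x / π) ^ 2 ≤ sin (x / 2) ^ 2 := by
  have key : ∀ y, 0 ≤ y → y ≤ π → (y / π) ^ 2 ≤ sin (y / 2) ^ 2 := fun y hy0 hyπ => by
    have := mul_le_sin (x := y / 2) (by positivity) (by linarith)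
    have h : y / π = 2 / π * (y / 2) := by field_simp
    rw [h]
    gcongr
  rcases le_total 0 x with h | h
  · exact key x h (by simpa [abs_of_nonneg h] using hx)
  · simpa [neg_div, sin_neg] using key (-x) (by linarith) (by simpa [abs_of_nonpos h] using hx)

theorem sin_half_sq_pos {x : ℝ} (hx0 : x ≠ 0) (hx : |x| ≤ π) : 0 < sin (x / 2) ^ 2 :=
  lt_of_lt_of_le (by have := pi_pos; positivity) (sq_div_pi_le_sin_half_sq hx)

theorem abs_div_two_mul_sin_sq_le {a b x : ℝ} (hx : |x| ≤ π) (hab : |a| ≤ |x| * b) :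
    |a / (2 * sin (x / 2) ^ 2)| ≤ π ^ 2 / 2 * (b / |x|) := by
  rcases eq_or_ne x 0 with rfl | hx0
  · simp
  have hxpos : 0 < |x| := abs_pos.2 hx0
  have hsin := sin_half_sq_pos hx0 hx
  rw [abs_div, abs_of_pos (by positivity : 0 < 2 * sin (x / 2) ^ 2)]
  calc |a| / (2 * sin (x / 2) ^ 2) ≤ |x| * b / (2 * (x / π) ^ 2) := by
        have := pi_pos
        exact div_le_div₀ ((abs_nonneg a).trans hab) hab (by positivity)
          (by linarith [sq_div_pi_le_sin_half_sq hx])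
    _ = π ^ 2 / 2 * (b / |x|) := by
        rw [div_pow, ← sq_abs x]
        field_simp

theorem intervalIntegrable_comp_mul_abs_div_abs {ω : ℝ → ℝ} {L r : ℝ} (hL : 0 < L) (hr : 0 ≤ r)
    (hω : IntegrableOn (fun t => ω t / t) (Ioc 0 (L * r))) :
    IntervalIntegrable (fun x => ω (L * |x|) / |x|) volume (-r) r := by
  have hscaled : IntervalIntegrable (fun x => L * (ω (L * x) / (L * x))) volume 0 r := by
    have h := (intervalIntegrable_iff_integrableOn_Ioc_of_le (by positivity)).2 hω
    simpa [mul_div_cancel_left₀ _ hL.ne'] using (h.comp_mul_left (c := L)).const_mul L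
  have hpos : IntervalIntegrable (fun x => ω (L * |x|) / |x|) volume 0 r := by
    refine hscaled.congr fun x hx => ?_
    rw [uIoc_of_le hr] at hx
    rw [abs_of_pos hx.1]
    field_simp
  have hneg : IntervalIntegrable (fun x => ω (L * |x|) / |x|) volume (-r) 0 := by
    simpa using ((IntervalIntegrable.iff_comp_neg).1 hpos).symm
  exact hneg.trans hpos

theorem LipschitzWith.pos_of_apply_ne {α β : Type*} [PseudoMetricSpace α] [PseudoMetricSpace β]
    {f : α → β} {L : NNReal} (hf : LipschitzWith L f) {a b : α} (h : dist (f a) (f b) ≠ 0) :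
    0 < (L : ℝ) := by
  refine L.coe_nonneg.lt_of_ne fun hL => h (le_antisymm ?_ dist_nonneg)
  simpa [← hL] using hf.dist_le_mul a b

theorem intervalIntegrable_div_two_mul_sin_sq {N ω : ℝ → ℝ} {L : ℝ} (hN : Continuous N)
    (hL : 0 < L) (hω : ∃ k > 0, IntegrableOn (fun t => ω t / t) (Ioc 0 k))
    (hNω : ∀ x, |N x| ≤ |x| * (L * ω (L * |x|))) :
    IntervalIntegrable (fun x => N x / (2 * sin (x / 2) ^ 2)) volume (-π) π := by
  obtain ⟨k, hk, hωk⟩ := hω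
  set r := min π (k / L)
  have hr : 0 < r := lt_min pi_pos (by positivity)
  have hrπ : r ≤ π := min_le_left _ _
  have hLr : L * r ≤ k :=
    (mul_le_mul_of_nonneg_left (min_le_right _ _) hL.le).trans (mul_div_cancel₀ k hL.ne').le
  have hcont {a b : ℝ} (hab : ∀ x ∈ uIcc a b, x ≠ 0 ∧ |x| ≤ π) :
      IntervalIntegrable (fun x => N x / (2 * sin (x / 2) ^ 2)) volume a b :=
    ContinuousOn.intervalIntegrable (hN.continuousOn.div (by fun_prop) fun x hx =>
      (mul_pos two_pos (sin_half_sq_pos (hab x hx).1 (hab x hx).2)).ne')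
  have hleft : IntervalIntegrable (fun x => N x / (2 * sin (x / 2) ^ 2)) volume (-π) (-r) :=
    hcont fun x hx => by
      rw [uIcc_of_le (by linarith)] at hx
      exact ⟨by linarith [hx.2], abs_le.2 ⟨hx.1, by linarith [hx.2]⟩⟩
  have hright : IntervalIntegrable (fun x => N x / (2 * sin (x / 2) ^ 2)) volume r π :=
    hcont fun x hx => by
      rw [uIcc_of_le hrπ] at hx
      exact ⟨by linarith [hx.1], abs_le.2 ⟨by linarith [hx.1, pi_pos], hx.2⟩⟩
  have hmiddle : IntervalIntegrable (fun x => N x / (2 * sin (x / 2) ^ 2)) volume (-r) r := by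
    refine ((intervalIntegrable_comp_mul_abs_div_abs hL hr.le
      (hωk.mono_set (Ioc_subset_Ioc_right hLr))).const_mul (π ^ 2 / 2 * L)).mono_fun'
      (hN.measurable.div (by fun_prop)).aestronglyMeasurable ?_
    refine (ae_restrict_mem measurableSet_uIoc).mono fun x hx => ?_
    rw [uIoc_of_le (by linarith)] at hx
    calc ‖N x / (2 * sin (x / 2) ^ 2)‖ ≤ π ^ 2 / 2 * (L * ω (L * |x|) / |x|) :=
          abs_div_two_mul_sin_sq_le ((abs_le.2 ⟨hx.1.le, hx.2⟩).trans hrπ) (hNω x)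
      _ = π ^ 2 / 2 * L * (ω (L * |x|) / |x|) := by ring
  exact (hleft.trans hmiddle).trans hright

theorem intervalIntegral_pos_of_continuousAt {F : ℝ → ℝ} {a b x₀ : ℝ} (hab : a < b)
    (hF : ∀ x ∈ Ioc a b, 0 ≤ F x) (hint : IntervalIntegrable F volume a b) (hx₀ : x₀ ∈ Icc a b)
    (hc : ContinuousAt F x₀) (hpos : 0 < F x₀) : 0 < ∫ x in a..b, F x := by
  rw [intervalIntegral.integral_pos_iff_support_of_nonneg_ae'
    ((ae_restrict_mem measurableSet_uIoc).mono fun x hx => hF x (by rwa [uIoc_of_le hab.le] at hx))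
    hint]
  refine ⟨hab, ?_⟩
  obtain ⟨U, hUF, hUo, hx₀U⟩ := mem_nhds_iff.1 (hc.eventually (lt_mem_nhds hpos))
  have hne : (U ∩ Ioo a b).Nonempty :=
    mem_closure_iff.1 (by rwa [closure_Ioo hab.ne]) U hUo hx₀U
  refine lt_of_lt_of_le ((hUo.inter isOpen_Ioo).measure_pos volume hne) (measure_mono ?_)
  exact fun x hx => ⟨(hUF hx.1).ne', Ioo_subset_Ioc_self hx.2⟩

theorem integral_div_two_mul_sin_sq_pos {N : ℝ → ℝ} (hN : Continuous N) (hN0 : N 0 = 0)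
    (hN_nonneg : ∀ x, 0 ≤ N x)
    (hint : IntervalIntegrable (fun x => N x / (2 * sin (x / 2) ^ 2)) volume (-π) π)
    {x₀ : ℝ} (hx₀ : x₀ ∈ Icc (-π) π) (hpos : 0 < N x₀) :
    0 < ∫ x in -π..π, N x / (2 * sin (x / 2) ^ 2) := by
  have hsin : 0 < sin (x₀ / 2) ^ 2 :=
    sin_half_sq_pos (by rintro rfl; exact hpos.ne' hN0) (abs_le.2 hx₀)
  exact intervalIntegral_pos_of_continuousAt (by linarith [pi_pos])
    (fun x _ => div_nonneg (hN_nonneg x) (by positivity)) hint hx₀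
    (hN.continuousAt.div (by fun_prop) (by positivity)) (by positivity)

theorem Topf_eq_integral_centered {g : ℝ → ℂ} {f : ℝ → ℝ}
    (hgf : ∀ t, g (f (t + 2 * π)) = g (f t)) (τ : ℝ) :
    Topf g f τ = ∫ x in -π..π, Kker g (f τ) (f (τ + x)) / (2 * sin (x / 2) ^ 2) := by
  have hper : Periodic (fun t => Kker g (f τ) (f t) / (2 * sin ((t - τ) / 2) ^ 2)) (2 * π) :=
    fun t => by
      dsimp only
      rw [Kker, Kker, hgf, show (t + 2 * π - τ) / 2 = (t - τ) / 2 + π by ring, sin_add_pi, neg_sq]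
  have hshift := intervalIntegral.integral_comp_add_left
    (fun t => Kker g (f τ) (f t) / (2 * sin ((t - τ) / 2) ^ 2)) (a := -π) (b := π) τ
  simp only [add_sub_cancel_left] at hshift
  rw [Topf, ← zero_add (2 * π), hper.intervalIntegral_add_eq 0 (τ - π), hshift]
  congr 1; ring

theorem exists_mem_Icc_comp_eq {X : Type*} {f : ℝ → ℝ} {g : ℝ → X} {l T : ℝ} (hf : Continuous f)
    (hg : Periodic g l) (hl : 0 < l) (hT : 0 ≤ T) (hfT : ∀ t, f (t + T) = f t + l) (a s : ℝ) :
    ∃ t ∈ Icc a (a + T), g (f t) = g s := by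
  obtain ⟨y, hy, hgy⟩ := hg.exists_mem_Ico hl s (f a)
  have hy' : y ∈ Icc (f a) (f (a + T)) := hfT a ▸ Ico_subset_Icc_self hy
  obtain ⟨t, ht, hft⟩ :=
    intermediate_value_Icc (le_add_of_nonneg_right hT) hf.continuousOn hy'
  exact ⟨t, ht, hft ▸ hgy.symm⟩

theorem abs_Kker_comp_le {g : ℝ → ℂ} (hg : Differentiable ℝ g) {f : ℝ → ℝ} {L : NNReal}
    (hf : LipschitzWith L f) {ω : ℝ → ℝ}
    (hω : ∀ δ ≥ (0:ℝ), ∀ x y : ℝ, |x - y| ≤ δ → ‖deriv g x - deriv g y‖ ≤ ω δ) {τ : ℝ}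
    (hunit : ‖deriv g (f τ)‖ = 1) (x : ℝ) :
    |Kker g (f τ) (f (τ + x))| ≤ |x| * (L * ω (L * |x|)) := by
  have hlip : |f (τ + x) - f τ| ≤ L * |x| := by
    simpa [Real.dist_eq] using hf.dist_le_mul (τ + x) τ
  rw [Kker_eq_inner, ← mul_assoc, mul_comm |x|]
  exact abs_inner_sub_mul_I_deriv_le hg hunit hlip fun u hu => hω _ (by positivity) u _ hu

theorem Kker_nonneg_of_convex {D : Set ℂ} (hD : Convex ℝ D) (hDo : IsOpen D) {g : ℝ → ℂ}
    (hgD : ∀ t, g t ∈ frontier D) {s u : ℝ} (hg : DifferentiableAt ℝ g s) (hu : 0 < u)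
    (hin : g s + u * (Complex.I * deriv g s) ∈ D) (t : ℝ) : 0 ≤ Kker g s t := by
  rw [Kker_eq_inner]
  exact hD.inner_sub_mul_I_deriv_nonneg hDo hg (fun t => frontier_subset_closure (hgD t))
    (hDo.frontier_eq ▸ hgD s).2 hu hin (frontier_subset_closure (hgD t))

theorem exists_Kker_comp_pos {D : Set ℂ} (hDb : IsBounded D) {l : ℝ} (hl : 0 < l) {g : ℝ → ℂ}
    (hper : Periodic g l) (hfront : frontier D ⊆ range g) {f : ℝ → ℝ} (hf : Continuous f)
    (hfT : ∀ t, f (t + 2 * π) = f t + l) {τ u : ℝ} (hτ : deriv g (f τ) ≠ 0) (hu : 0 < u)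
    (hin : g (f τ) + u * (Complex.I * deriv g (f τ)) ∈ D) :
    ∃ x ∈ Icc (-π) π, 0 < Kker g (f τ) (f (τ + x)) := by
  obtain ⟨q, hq, hq_pos⟩ := hDb.exists_frontier_inner_pos hu
    (mul_ne_zero Complex.I_ne_zero hτ) (by rwa [← Complex.real_smul] at hin)
  obtain ⟨s, rfl⟩ := hfront hq
  obtain ⟨t, ht, hgt⟩ := exists_mem_Icc_comp_eq hf hper hl two_pi_pos.le hfT (τ - π) s
  refine ⟨t - τ, ⟨by linarith [ht.1], by linarith [ht.2]⟩, ?_⟩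
  rwa [add_sub_cancel, Kker_eq_inner, hgt]

theorem T_pos_of_convex_general (l : ℝ) (hl : 0 < l) (L : NNReal)
    (D : Set ℂ) (hD : Convex ℝ D) (hDo : IsOpen D) (hDb : Bornology.IsBounded D)
    (g : ℝ → ℂ) (hg : ContDiff ℝ 1 g)
    (hper : ∀ s, g (s + l) = g s)
    (hunit : ∀ s, ‖deriv g s‖ = 1)
    (hfront : g '' Icc 0 l = frontier D)
    -- positive orientation: the inner unit normal `i g'(s)` points into `D`
    (horient : ∀ s, ∃ ε > (0:ℝ), ∀ u ∈ Ioo (0:ℝ) ε,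
        g s + (u : ℂ) * (Complex.I * deriv g s) ∈ D)
    (ω : ℝ → ℝ)
    (hω : ∀ δ ≥ (0:ℝ), ∀ x y : ℝ, |x - y| ≤ δ → ‖deriv g x - deriv g y‖ ≤ ω δ)
    (hωD : ∃ k > (0:ℝ), IntegrableOn (fun t => ω t / t) (Ioc 0 k))
    (f : ℝ → ℝ) (hfl : LipschitzWith L f)
    (hfqp : ∀ t, f (t + 2 * π) = f t + l) :
    ∀ τ ∈ Icc (0:ℝ) (2 * π), 0 < Topf g f τ := by
  intro τ _
  have hgd : Differentiable ℝ g := hg.differentiable one_ne_zero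
  have hgD : ∀ t, g t ∈ frontier D := fun t => by
    obtain ⟨y, hy, hgy⟩ := Periodic.exists_mem_Ico₀ hper hl t
    exact hgy ▸ hfront ▸ mem_image_of_mem g (Ico_subset_Icc_self hy)
  obtain ⟨ε, hε, hin⟩ := horient (f τ)
  have hinner := hin (ε / 2) ⟨half_pos hε, half_lt_self hε⟩
  have hK := Kker_nonneg_of_convex hD hDo hgD (hgd _) (half_pos hε) hinner
  obtain ⟨x₁, hx₁, hpos⟩ := exists_Kker_comp_pos hDb hl hper
    (hfront ▸ image_subset_range g _) hfl.continuous hfqp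
    (norm_ne_zero_iff.1 (by rw [hunit]; exact one_ne_zero)) (half_pos hε) hinner
  have hL : 0 < (L : ℝ) := hfl.pos_of_apply_ne (a := 0 + 2 * π) (b := 0) <| by
    rw [hfqp, dist_self_add_left, norm_eq_abs, abs_of_pos hl]
    exact hl.ne'
  have hN : Continuous fun x => Kker g (f τ) (f (τ + x)) :=
    (continuous_Kker hg.continuous _).comp (hfl.continuous.comp (continuous_const_add τ))
  have hint := intervalIntegrable_div_two_mul_sin_sq hN hL hωD
    (abs_Kker_comp_le hgd hfl hω (hunit _))
  rw [Topf_eq_integral_centered (fun t => by rw [hfqp, hper]) τ]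
  exact integral_div_two_mul_sin_sq_pos hN (by simp [Kker]) (fun _ => hK _) hint hx₁ hpos

/-- For a convex Dini-smooth Jordan curve, positively oriented, and a Lipschitz weak
homeomorphism `f`, the operator `T[f]` is strictly positive. -/
theorem T_pos_of_convex (l : ℝ) (hl : 0 < l) (L : NNReal)
    (D : Set ℂ) (hD : Convex ℝ D) (hDo : IsOpen D) (hDb : Bornology.IsBounded D)
    (hDne : D.Nonempty)
    (g : ℝ → ℂ) (hg : ContDiff ℝ 1 g)
    (hper : ∀ s, g (s + l) = g s)
    (hunit : ∀ s, ‖deriv g s‖ = 1)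
    (hfront : g '' Icc 0 l = frontier D)
    (hginj : InjOn g (Ico 0 l))
    -- positive orientation: the inner unit normal `i g'(s)` points into `D`
    (horient : ∀ s, ∃ ε > (0:ℝ), ∀ u ∈ Ioo (0:ℝ) ε,
        g s + (u : ℂ) * (Complex.I * deriv g s) ∈ D)
    (ω : ℝ → ℝ)
    (hω : ∀ δ ≥ (0:ℝ), ∀ x y : ℝ, |x - y| ≤ δ → ‖deriv g x - deriv g y‖ ≤ ω δ)
    (hωD : ∃ k > (0:ℝ), IntegrableOn (fun t => ω t / t) (Ioc 0 k))
    (f : ℝ → ℝ) (hf : Monotone f) (hfl : LipschitzWith L f) (hf0 : f 0 = 0)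
    (hfqp : ∀ t, f (t + 2 * π) = f t + l) :
    ∀ τ ∈ Icc (0:ℝ) (2 * π), 0 < Topf g f τ :=
  T_pos_of_convex_general l hl L D hD hDo hDb g hg hper hunit hfront horient ω hω hωD f hfl hfqp
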